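/- Let A be a nonnegative symmetric n×n real matrix, Ā an n×n symmetric matrix with supp(Ā) = supp(A), β > 0, Z ∈ S^n_A ∩ {0,1}^{n×n}, and H ∈ ℝ^{n×d} with H^⊤ H = I_d. Define G ∈ ℝ^{n×n} by G_{ij} = (A_{ij}((HH^⊤)_{ii} − (HH^⊤)_{ij}) − β Ā_{ij}) + (A_{ji}((HH^⊤)_{jj} − (HH^⊤)_{ji}) − β Ā_{ji}), and define Z' by Z'_{ij} = 0 if G_{ij} > 0, Z'_{ij} = Z_{ij} if G_{ij} = 0, and Z'_{ij} = 1 if G_{ij} < 0. Then Z' ∈ S^n_A ∩ {0,1}^{n×n} and Z' is a global minimizer of the function Z ↦ f(Z, H) over S^n_A ∩ [0,1]^{n×n}, where f(Z,H) := tr(H^⊤ L(A∘Z) H) − β tr(Ā Z). -/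
import Mathlib


open Matrix BigOperators

/-- The graph Laplacian of a matrix: `L(M) = Diag(M e) - M`. -/
noncomputable def Lap {n : ℕ} (M : Matrix (Fin n) (Fin n) ℝ) : Matrix (Fin n) (Fin n) ℝ :=
  Matrix.diagonal (fun i => ∑ j, M i j) - M

/-- The objective `f(Z, H) = tr(Hᵀ L(A ∘ Z) H) - β tr(Ā Z)`. -/
noncomputable def fobj {n d : ℕ} (A Abar : Matrix (Fin n) (Fin n) ℝ) (β : ℝ)
    (Z : Matrix (Fin n) (Fin n) ℝ) (H : Matrix (Fin n) (Fin d) ℝ) : ℝ :=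
  Matrix.trace (Hᵀ * Lap (Matrix.hadamard A Z) * H) - β * Matrix.trace (Abar * Z)

/-- Feasibility for problem (CP): `Z ∈ Sⁿ_A ∩ [0,1]^{n×n}` and `Hᵀ H = I_d`. -/
def feasCP {n d : ℕ} (A : Matrix (Fin n) (Fin n) ℝ)
    (Z : Matrix (Fin n) (Fin n) ℝ) (H : Matrix (Fin n) (Fin d) ℝ) : Prop :=
  Zᵀ = Z ∧ (∀ i j, Z i j ≠ 0 → A i j ≠ 0) ∧ (∀ i j, 0 ≤ Z i j ∧ Z i j ≤ 1) ∧ Hᵀ * H = 1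

/-- Feasibility for problem (MIP): `Z ∈ Sⁿ_A ∩ {0,1}^{n×n}` and `Hᵀ H = I_d`. -/
def feasMIP {n d : ℕ} (A : Matrix (Fin n) (Fin n) ℝ)
    (Z : Matrix (Fin n) (Fin n) ℝ) (H : Matrix (Fin n) (Fin d) ℝ) : Prop :=
  Zᵀ = Z ∧ (∀ i j, Z i j ≠ 0 → A i j ≠ 0) ∧ (∀ i j, Z i j = 0 ∨ Z i j = 1) ∧ Hᵀ * H = 1

lemma trace_Lap {n d : ℕ} (M : Matrix (Fin n) (Fin n) ℝ) (H : Matrix (Fin n) (Fin d) ℝ) :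
    Matrix.trace (Hᵀ * Lap M * H) =
      ∑ i, ∑ j, M i j * ((H * Hᵀ) i i - (H * Hᵀ) i j) := by
  have hP : ∀ i j, (H * Hᵀ) j i = (H * Hᵀ) i j := by
    intro i j
    have h : (H * Hᵀ)ᵀ = H * Hᵀ := by rw [transpose_mul, transpose_transpose]
    calc (H * Hᵀ) j i = (H * Hᵀ)ᵀ i j := rfl
      _ = (H * Hᵀ) i j := by rw [h]
  rw [Matrix.mul_assoc, Matrix.trace_mul_comm, Matrix.mul_assoc]
  rw [Lap, Matrix.sub_mul, Matrix.trace_sub]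
  have h1 : Matrix.trace (Matrix.diagonal (fun i => ∑ j, M i j) * (H * Hᵀ))
      = ∑ i, ∑ j, M i j * (H * Hᵀ) i i := by
    simp only [Matrix.trace, Matrix.diag, Matrix.diagonal_mul]
    exact Finset.sum_congr rfl fun i _ => by rw [Finset.sum_mul]
  have h2 : Matrix.trace (M * (H * Hᵀ)) = ∑ i, ∑ j, M i j * (H * Hᵀ) i j := by
    simp only [Matrix.trace, Matrix.diag]
    refine Finset.sum_congr rfl fun i _ => ?_
    rw [Matrix.mul_apply]
    exact Finset.sum_congr rfl fun j _ => by rw [hP]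
  rw [h1, h2, ← Finset.sum_sub_distrib]
  exact Finset.sum_congr rfl fun i _ => by
    rw [← Finset.sum_sub_distrib]
    exact Finset.sum_congr rfl fun j _ => by ring
lemma fobj_eq {n d : ℕ} (A Abar : Matrix (Fin n) (Fin n) ℝ) (β : ℝ)
    (W : Matrix (Fin n) (Fin n) ℝ) (H : Matrix (Fin n) (Fin d) ℝ) (hW : Wᵀ = W) :
    fobj A Abar β W H =
      ∑ i, ∑ j, (A i j * ((H * Hᵀ) i i - (H * Hᵀ) i j) - β * Abar i j) * W i j := by
  have hWs : ∀ i j, W j i = W i j := fun i j => by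
    calc W j i = Wᵀ i j := rfl
      _ = W i j := by rw [hW]
  have htr : Matrix.trace (Abar * W) = ∑ i, ∑ j, Abar i j * W i j := by
    simp only [Matrix.trace, Matrix.diag]
    refine Finset.sum_congr rfl fun i _ => ?_
    rw [Matrix.mul_apply]
    exact Finset.sum_congr rfl fun j _ => by rw [hWs]
  rw [fobj, trace_Lap, htr, Finset.mul_sum, ← Finset.sum_sub_distrib]
  refine Finset.sum_congr rfl fun i _ => ?_
  rw [Finset.mul_sum, ← Finset.sum_sub_distrib]
  exact Finset.sum_congr rfl fun j _ => by rw [Matrix.hadamard_apply]; ring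

theorem stmt14 {n d : ℕ} (A Abar : Matrix (Fin n) (Fin n) ℝ)
    (hAsym : Aᵀ = A) (hAnn : ∀ i j, 0 ≤ A i j)
    (hAbarsym : Abarᵀ = Abar)
    (hsupp : ∀ i j, Abar i j ≠ 0 ↔ A i j ≠ 0)
    (β : ℝ) (hβ : 0 < β)
    (Z : Matrix (Fin n) (Fin n) ℝ)
    (hZsym : Zᵀ = Z) (hZsupp : ∀ i j, Z i j ≠ 0 → A i j ≠ 0)
    (hZbin : ∀ i j, Z i j = 0 ∨ Z i j = 1)
    (H : Matrix (Fin n) (Fin d) ℝ) (hH : Hᵀ * H = 1)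
    (G : Matrix (Fin n) (Fin n) ℝ)
    (hG : ∀ i j, G i j =
      (A i j * ((H * Hᵀ) i i - (H * Hᵀ) i j) - β * Abar i j) +
      (A j i * ((H * Hᵀ) j j - (H * Hᵀ) j i) - β * Abar j i))
    (Z' : Matrix (Fin n) (Fin n) ℝ)
    (hZ' : ∀ i j, (0 < G i j → Z' i j = 0) ∧ (G i j = 0 → Z' i j = Z i j) ∧
      (G i j < 0 → Z' i j = 1)) :
    (Z'ᵀ = Z' ∧ (∀ i j, Z' i j ≠ 0 → A i j ≠ 0) ∧ (∀ i j, Z' i j = 0 ∨ Z' i j = 1)) ∧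
    ∀ W : Matrix (Fin n) (Fin n) ℝ,
      (Wᵀ = W ∧ (∀ i j, W i j ≠ 0 → A i j ≠ 0) ∧ (∀ i j, 0 ≤ W i j ∧ W i j ≤ 1)) →
      fobj A Abar β Z' H ≤ fobj A Abar β W H := by
  have hAs : ∀ i j, A j i = A i j := fun i j => by
    calc A j i = Aᵀ i j := rfl
      _ = A i j := by rw [hAsym]
  have hZs : ∀ i j, Z j i = Z i j := fun i j => by
    calc Z j i = Zᵀ i j := rfl
      _ = Z i j := by rw [hZsym]
  have hGsym : ∀ i j, G j i = G i j := fun i j => by rw [hG, hG]; ring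
  have hG0 : ∀ i j, A i j = 0 → G i j = 0 := by
    intro i j h
    have h2 : A j i = 0 := (hAs i j).trans h
    have hb1 : Abar i j = 0 := by
      by_contra hb; exact ((hsupp i j).mp hb) h
    have hb2 : Abar j i = 0 := by
      by_contra hb; exact ((hsupp j i).mp hb) h2
    rw [hG, h, h2, hb1, hb2]; ring
  have hZ'sym : Z'ᵀ = Z' := by
    ext i j
    show Z' j i = Z' i j
    rcases lt_trichotomy (G i j) 0 with h | h | h
    · rw [(hZ' i j).2.2 h, (hZ' j i).2.2 (by rw [hGsym]; exact h)]
    · rw [(hZ' i j).2.1 h, (hZ' j i).2.1 (by rw [hGsym]; exact h), hZs]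
    · rw [(hZ' i j).1 h, (hZ' j i).1 (by rw [hGsym]; exact h)]
  have hZ'supp : ∀ i j, Z' i j ≠ 0 → A i j ≠ 0 := by
    intro i j h hA0
    have hg := hG0 i j hA0
    have := (hZ' i j).2.1 hg
    exact hZsupp i j (this ▸ h) hA0
  have hZ'bin : ∀ i j, Z' i j = 0 ∨ Z' i j = 1 := by
    intro i j
    rcases lt_trichotomy (G i j) 0 with h | h | h
    · exact Or.inr ((hZ' i j).2.2 h)
    · rw [(hZ' i j).2.1 h]; exact hZbin i j
    · exact Or.inl ((hZ' i j).1 h)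
  refine ⟨⟨hZ'sym, hZ'supp, hZ'bin⟩, ?_⟩
  rintro W ⟨hWsym, hWsupp, hWbd⟩
  have key : ∀ V : Matrix (Fin n) (Fin n) ℝ, Vᵀ = V →
      2 * fobj A Abar β V H = ∑ i, ∑ j, G i j * V i j := by
    intro V hV
    have hVs : ∀ i j, V j i = V i j := fun i j => by
      calc V j i = Vᵀ i j := rfl
        _ = V i j := by rw [hV]
    set c : Matrix (Fin n) (Fin n) ℝ :=
      fun i j => A i j * ((H * Hᵀ) i i - (H * Hᵀ) i j) - β * Abar i j with hc
    have hfe : fobj A Abar β V H = ∑ i, ∑ j, c i j * V i j := fobj_eq A Abar β V H hV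
    have hswap : (∑ i, ∑ j, c i j * V i j) = ∑ i, ∑ j, c j i * V i j := by
      calc (∑ i, ∑ j, c i j * V i j) = ∑ j, ∑ i, c i j * V i j := Finset.sum_comm
        _ = ∑ i, ∑ j, c j i * V i j :=
          Finset.sum_congr rfl fun i _ => Finset.sum_congr rfl fun j _ => by rw [hVs]
    rw [hfe, two_mul]
    nth_rewrite 2 [hswap]
    rw [← Finset.sum_add_distrib]
    refine Finset.sum_congr rfl fun i _ => ?_
    rw [← Finset.sum_add_distrib]
    refine Finset.sum_congr rfl fun j _ => ?_
    rw [hG]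
    show c i j * V i j + c j i * V i j = (c i j + c j i) * V i j
    ring
  have h2 : 2 * fobj A Abar β Z' H ≤ 2 * fobj A Abar β W H := by
    rw [key Z' hZ'sym, key W hWsym]
    refine Finset.sum_le_sum fun i _ => Finset.sum_le_sum fun j _ => ?_
    rcases lt_trichotomy (G i j) 0 with h | h | h
    · rw [(hZ' i j).2.2 h, mul_one]
      nlinarith [(hWbd i j).2]
    · rw [h]; simp
    · rw [(hZ' i j).1 h, mul_zero]
      exact mul_nonneg h.le (hWbd i j).1
  linarith
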